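/- arXiv:2011.11306 — 5 statements merged into one kernel-verified Lean document; each statement's English description precedes it below -/
import Mathlib

section
/- Let γ ∈ (0,1), μ > 0, and M(θ) = θ^{−γ} ∫₀^θ (1 − e^{−μξ^γ})/ξ^{1−γ} dξ for θ > 0. Then M is differentiable on (0,∞) with M'(θ) = (μγ/θ^{γ+1}) ∫₀^θ ξ^{2γ−1} e^{−μξ^γ} dξ, and consequently 0 ≤ M'(θ) ≤ μ/(2 θ^{1−γ}) for all θ > 0. -/
/-- The auxiliary function `M(θ) = θ^(−γ) ∫₀^θ (1 − e^(−μξ^γ))/ξ^(1−γ) dξ`. -/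
noncomputable def Mfun (γ μ θ : ℝ) : ℝ :=
  θ ^ (-γ) * ∫ ξ in (0:ℝ)..θ, (1 - Real.exp (-(μ * ξ ^ γ))) / ξ ^ (1 - γ)

open MeasureTheory Set intervalIntegral

lemma expDeriv {γ μ : ℝ} (hγ0 : 0 < γ) {x : ℝ} (hx : 0 < x) :
    HasDerivAt (fun ξ : ℝ => Real.exp (-(μ * ξ ^ γ)))
      (Real.exp (-(μ * x ^ γ)) * (-(μ * (γ * x ^ (γ - 1))))) x := by
  have h1 : HasDerivAt (fun ξ : ℝ => ξ ^ γ) (γ * x ^ (γ - 1)) x :=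
    Real.hasDerivAt_rpow_const (Or.inl hx.ne')
  exact ((h1.const_mul μ).neg).exp

lemma contOn_rpow {γ : ℝ} (hγ0 : 0 < γ) (s : Set ℝ) :
    ContinuousOn (fun ξ : ℝ => ξ ^ γ) s := fun x _ =>
  (Real.continuousAt_rpow_const x γ (Or.inr hγ0.le)).continuousWithinAt

lemma contOn_exp {γ μ : ℝ} (hγ0 : 0 < γ) (s : Set ℝ) :
    ContinuousOn (fun ξ : ℝ => Real.exp (-(μ * ξ ^ γ))) s :=
  Real.continuous_exp.comp_continuousOn
    (((contOn_rpow hγ0 s).const_smul μ).neg)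

lemma int_f1 {γ μ : ℝ} (hγ0 : 0 < γ) (hγ1 : γ < 1) (hμ : 0 < μ) {θ : ℝ} (hθ : 0 < θ) :
    IntervalIntegrable (fun ξ : ℝ => (1 - Real.exp (-(μ * ξ ^ γ))) / ξ ^ (1 - γ))
      volume 0 θ := by
  apply (intervalIntegrable_rpow' (a := 0) (b := θ) (r := γ - 1) (by linarith)).mono_fun
  · rw [Set.uIoc_of_le hθ.le]
    apply ContinuousOn.aestronglyMeasurable _ measurableSet_Ioc
    apply ContinuousOn.div (continuousOn_const.sub (contOn_exp hγ0 _))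
      (contOn_rpow (by linarith : (0:ℝ) < 1 - γ) _)
    exact fun x hx => (Real.rpow_pos_of_pos hx.1 _).ne'
  · filter_upwards [MeasureTheory.ae_restrict_mem measurableSet_uIoc] with x hx
    rw [Set.uIoc_of_le hθ.le] at hx
    have hx0 : 0 < x := hx.1
    have hE1 : Real.exp (-(μ * x ^ γ)) ≤ 1 := by
      rw [Real.exp_le_one_iff]
      have : 0 ≤ μ * x ^ γ := mul_nonneg hμ.le (Real.rpow_nonneg hx0.le _)
      linarith
    have hE0 : 0 < Real.exp (-(μ * x ^ γ)) := Real.exp_pos _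
    have hp : (0:ℝ) < x ^ (1 - γ) := Real.rpow_pos_of_pos hx0 _
    have key : x ^ (γ - 1) = (x ^ (1 - γ))⁻¹ := by
      rw [show γ - 1 = -(1 - γ) by ring, Real.rpow_neg hx0.le]
    rw [Real.norm_eq_abs, Real.norm_eq_abs,
      abs_of_nonneg (div_nonneg (by linarith) hp.le),
      abs_of_nonneg (Real.rpow_nonneg hx0.le _), key, div_eq_mul_inv]
    exact mul_le_of_le_one_left (inv_nonneg.mpr hp.le) (by linarith)

lemma int_f2 {γ μ : ℝ} (hγ0 : 0 < γ) (hγ1 : γ < 1) (hμ : 0 < μ) {θ : ℝ} (hθ : 0 < θ) :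
    IntervalIntegrable (fun ξ : ℝ => ξ ^ (2 * γ - 1) * Real.exp (-(μ * ξ ^ γ)))
      volume 0 θ := by
  apply (intervalIntegrable_rpow' (a := 0) (b := θ) (r := 2 * γ - 1) (by linarith)).mono_fun
  · rw [Set.uIoc_of_le hθ.le]
    apply ContinuousOn.aestronglyMeasurable _ measurableSet_Ioc
    have hc : ContinuousOn (fun x : ℝ => x ^ (2 * γ - 1)) (Set.Ioc 0 θ) :=
      fun x hx => (Real.continuousAt_rpow_const x _ (Or.inl hx.1.ne')).continuousWithinAt
    exact hc.mul (contOn_exp hγ0 _)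
  · filter_upwards [MeasureTheory.ae_restrict_mem measurableSet_uIoc] with x hx
    rw [Set.uIoc_of_le hθ.le] at hx
    have hx0 : 0 < x := hx.1
    have hE1 : Real.exp (-(μ * x ^ γ)) ≤ 1 := by
      rw [Real.exp_le_one_iff]
      have : 0 ≤ μ * x ^ γ := mul_nonneg hμ.le (Real.rpow_nonneg hx0.le _)
      linarith
    rw [Real.norm_eq_abs, Real.norm_eq_abs,
      abs_of_nonneg (mul_nonneg (Real.rpow_nonneg hx0.le _) (Real.exp_pos _).le),
      abs_of_nonneg (Real.rpow_nonneg hx0.le _)]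
    exact mul_le_of_le_one_right (Real.rpow_nonneg hx0.le _) hE1

lemma integral_f1 {γ μ : ℝ} (hγ0 : 0 < γ) (hγ1 : γ < 1) (hμ : 0 < μ) {θ : ℝ} (hθ : 0 < θ) :
    (∫ ξ in (0:ℝ)..θ, (1 - Real.exp (-(μ * ξ ^ γ))) / ξ ^ (1 - γ))
      = θ ^ γ / γ + Real.exp (-(μ * θ ^ γ)) / (μ * γ) - 1 / (μ * γ) := by
  have hγ : γ ≠ 0 := hγ0.ne'
  have hμ' : μ ≠ 0 := hμ.ne'
  set A : ℝ → ℝ := fun ξ => ξ ^ γ / γ + Real.exp (-(μ * ξ ^ γ)) / (μ * γ) with hA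
  have hcont : ContinuousOn A (Icc 0 θ) :=
    ((contOn_rpow hγ0 _).div_const γ).add ((contOn_exp hγ0 _).div_const (μ * γ))
  have hderiv : ∀ x ∈ Ioo (0:ℝ) θ,
      HasDerivWithinAt A ((1 - Real.exp (-(μ * x ^ γ))) / x ^ (1 - γ)) (Ioi x) x := by
    intro x hx
    have hx0 : 0 < x := hx.1
    have h1 : HasDerivAt (fun ξ : ℝ => ξ ^ γ) (γ * x ^ (γ - 1)) x :=
      Real.hasDerivAt_rpow_const (Or.inl hx0.ne')
    have h2 := (h1.div_const γ).add ((expDeriv hγ0 hx0 (μ := μ)).div_const (μ * γ))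
    have key : x ^ (γ - 1) = (x ^ (1 - γ))⁻¹ := by
      rw [show γ - 1 = -(1 - γ) by ring, Real.rpow_neg hx0.le]
    have heq : γ * x ^ (γ - 1) / γ + Real.exp (-(μ * x ^ γ)) * (-(μ * (γ * x ^ (γ - 1)))) / (μ * γ)
        = (1 - Real.exp (-(μ * x ^ γ))) / x ^ (1 - γ) := by
      rw [key, div_eq_mul_inv (1 - _)]
      field_simp
      ring
    rw [← heq]
    exact h2.hasDerivWithinAt
  have hint := int_f1 hγ0 hγ1 hμ hθ
  have := intervalIntegral.integral_eq_sub_of_hasDeriv_right_of_le hθ.le hcont hderiv hint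
  rw [this, hA]
  simp only [Real.zero_rpow hγ, mul_zero, neg_zero, Real.exp_zero]
  ring

lemma integral_f2 {γ μ : ℝ} (hγ0 : 0 < γ) (hγ1 : γ < 1) (hμ : 0 < μ) {θ : ℝ} (hθ : 0 < θ) :
    (∫ ξ in (0:ℝ)..θ, ξ ^ (2 * γ - 1) * Real.exp (-(μ * ξ ^ γ)))
      = (1 - Real.exp (-(μ * θ ^ γ))) / (μ ^ 2 * γ)
        - θ ^ γ * Real.exp (-(μ * θ ^ γ)) / (μ * γ) := by
  have hγ : γ ≠ 0 := hγ0.ne'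
  have hμ' : μ ≠ 0 := hμ.ne'
  set B : ℝ → ℝ := fun ξ =>
    -(Real.exp (-(μ * ξ ^ γ)) / (μ ^ 2 * γ)) - ξ ^ γ * Real.exp (-(μ * ξ ^ γ)) / (μ * γ)
    with hB
  have hcont : ContinuousOn B (Icc 0 θ) := by
    apply ContinuousOn.sub
    · exact ((contOn_exp hγ0 _).div_const _).neg
    · exact ((contOn_rpow hγ0 _).mul (contOn_exp hγ0 _)).div_const _
  have hderiv : ∀ x ∈ Ioo (0:ℝ) θ,
      HasDerivWithinAt B (x ^ (2 * γ - 1) * Real.exp (-(μ * x ^ γ))) (Ioi x) x := by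
    intro x hx
    have hx0 : 0 < x := hx.1
    have h1 : HasDerivAt (fun ξ : ℝ => ξ ^ γ) (γ * x ^ (γ - 1)) x :=
      Real.hasDerivAt_rpow_const (Or.inl hx0.ne')
    have hE := expDeriv hγ0 hx0 (μ := μ)
    have h2 := ((hE.div_const (μ ^ 2 * γ)).neg).sub ((h1.mul hE).div_const (μ * γ))
    have key : x ^ γ * x ^ (γ - 1) = x ^ (2 * γ - 1) := by
      rw [← Real.rpow_add hx0, show γ + (γ - 1) = 2 * γ - 1 by ring]
    have heq : -(Real.exp (-(μ * x ^ γ)) * (-(μ * (γ * x ^ (γ - 1)))) / (μ ^ 2 * γ))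
        - (γ * x ^ (γ - 1) * Real.exp (-(μ * x ^ γ))
          + x ^ γ * (Real.exp (-(μ * x ^ γ)) * (-(μ * (γ * x ^ (γ - 1)))))) / (μ * γ)
        = x ^ (2 * γ - 1) * Real.exp (-(μ * x ^ γ)) := by
      rw [← key]
      field_simp
      ring
    rw [← heq]
    exact h2.hasDerivWithinAt
  have hint := int_f2 hγ0 hγ1 hμ hθ
  have := intervalIntegral.integral_eq_sub_of_hasDeriv_right_of_le hθ.le hcont hderiv hint
  rw [this, hB]
  simp only [Real.zero_rpow hγ, mul_zero, neg_zero, Real.exp_zero, zero_mul]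
  ring

theorem stmt8 (γ μ : ℝ) (hγ0 : 0 < γ) (hγ1 : γ < 1) (hμ : 0 < μ) (θ : ℝ) (hθ : 0 < θ) :
    HasDerivAt (Mfun γ μ)
      (μ * γ / θ ^ (γ + 1) * ∫ ξ in (0:ℝ)..θ, ξ ^ (2 * γ - 1) * Real.exp (-(μ * ξ ^ γ))) θ ∧
    0 ≤ μ * γ / θ ^ (γ + 1) * ∫ ξ in (0:ℝ)..θ, ξ ^ (2 * γ - 1) * Real.exp (-(μ * ξ ^ γ)) ∧
    μ * γ / θ ^ (γ + 1) * (∫ ξ in (0:ℝ)..θ, ξ ^ (2 * γ - 1) * Real.exp (-(μ * ξ ^ γ))) ≤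
      μ / (2 * θ ^ (1 - γ)) := by
  have hγ : γ ≠ 0 := hγ0.ne'
  have hμ' : μ ≠ 0 := hμ.ne'
  have hθγ : (0:ℝ) < θ ^ γ := Real.rpow_pos_of_pos hθ _
  have hθγ1 : (0:ℝ) < θ ^ (γ + 1) := Real.rpow_pos_of_pos hθ _
  have hθ1γ : (0:ℝ) < θ ^ (1 - γ) := Real.rpow_pos_of_pos hθ _
  refine ⟨?_, ?_, ?_⟩
  · -- derivative
    set m : ℝ → ℝ := fun t =>
      t ^ (-γ) * (t ^ γ / γ + Real.exp (-(μ * t ^ γ)) / (μ * γ) - 1 / (μ * γ)) with hm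
    have hev : Mfun γ μ =ᶠ[nhds θ] m := by
      filter_upwards [isOpen_Ioi.mem_nhds (show θ ∈ Ioi (0:ℝ) from hθ)] with t ht
      rw [Mfun, integral_f1 hγ0 hγ1 hμ ht]
    have h1 : HasDerivAt (fun t : ℝ => t ^ (-γ)) (-γ * θ ^ (-γ - 1)) θ :=
      Real.hasDerivAt_rpow_const (Or.inl hθ.ne')
    have h2 : HasDerivAt (fun t : ℝ =>
        t ^ γ / γ + Real.exp (-(μ * t ^ γ)) / (μ * γ) - 1 / (μ * γ))
        (γ * θ ^ (γ - 1) / γ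
          + Real.exp (-(μ * θ ^ γ)) * (-(μ * (γ * θ ^ (γ - 1)))) / (μ * γ)) θ := by
      have := ((Real.hasDerivAt_rpow_const (x := θ) (p := γ)
        (Or.inl hθ.ne')).div_const γ).add ((expDeriv hγ0 hθ (μ := μ)).div_const (μ * γ))
      simpa using this.sub_const (1 / (μ * γ))
    have hd := h1.mul h2
    have hder : HasDerivAt (Mfun γ μ)
        (-γ * θ ^ (-γ - 1) * (θ ^ γ / γ + Real.exp (-(μ * θ ^ γ)) / (μ * γ) - 1 / (μ * γ))
          + θ ^ (-γ) * (γ * θ ^ (γ - 1) / γ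
            + Real.exp (-(μ * θ ^ γ)) * (-(μ * (γ * θ ^ (γ - 1)))) / (μ * γ))) θ :=
      hd.congr_of_eventuallyEq hev
    have e1 : θ ^ (-γ) = (θ ^ γ)⁻¹ := Real.rpow_neg hθ.le γ
    have e2 : θ ^ (-γ - 1) = (θ ^ γ)⁻¹ * θ⁻¹ := by
      rw [show -γ - 1 = -γ + (-1) by ring, Real.rpow_add hθ, e1, Real.rpow_neg_one]
    have e3 : θ ^ (γ - 1) = θ ^ γ * θ⁻¹ := by
      rw [show γ - 1 = γ + (-1) by ring, Real.rpow_add hθ, Real.rpow_neg_one]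
    have e4 : θ ^ (γ + 1) = θ ^ γ * θ := by
      rw [Real.rpow_add hθ, Real.rpow_one]
    have hfinal :
        -γ * θ ^ (-γ - 1) * (θ ^ γ / γ + Real.exp (-(μ * θ ^ γ)) / (μ * γ) - 1 / (μ * γ))
          + θ ^ (-γ) * (γ * θ ^ (γ - 1) / γ
            + Real.exp (-(μ * θ ^ γ)) * (-(μ * (γ * θ ^ (γ - 1)))) / (μ * γ))
        = μ * γ / θ ^ (γ + 1)
            * ∫ ξ in (0:ℝ)..θ, ξ ^ (2 * γ - 1) * Real.exp (-(μ * ξ ^ γ)) := by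
      rw [integral_f2 hγ0 hγ1 hμ hθ, e1, e2, e3, e4]
      field_simp
      ring
    rwa [hfinal] at hder
  · -- nonnegativity
    have hG0 : 0 ≤ ∫ ξ in (0:ℝ)..θ, ξ ^ (2 * γ - 1) * Real.exp (-(μ * ξ ^ γ)) := by
      apply intervalIntegral.integral_nonneg hθ.le
      intro x hx
      exact mul_nonneg (Real.rpow_nonneg hx.1 _) (Real.exp_pos _).le
    exact mul_nonneg (by positivity) hG0
  · -- upper bound
    have hmono : (∫ ξ in (0:ℝ)..θ, ξ ^ (2 * γ - 1) * Real.exp (-(μ * ξ ^ γ)))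
        ≤ ∫ ξ in (0:ℝ)..θ, ξ ^ (2 * γ - 1) := by
      apply intervalIntegral.integral_mono_on hθ.le (int_f2 hγ0 hγ1 hμ hθ)
        (intervalIntegrable_rpow' (by linarith))
      intro x hx
      have hE1 : Real.exp (-(μ * x ^ γ)) ≤ 1 := by
        rw [Real.exp_le_one_iff]
        have : 0 ≤ μ * x ^ γ := mul_nonneg hμ.le (Real.rpow_nonneg hx.1 _)
        linarith
      exact mul_le_of_le_one_right (Real.rpow_nonneg hx.1 _) hE1
    have hval : (∫ ξ in (0:ℝ)..θ, ξ ^ (2 * γ - 1)) = θ ^ (2 * γ) / (2 * γ) := by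
      rw [integral_rpow (Or.inl (by linarith))]
      rw [show 2 * γ - 1 + 1 = 2 * γ by ring, Real.zero_rpow (by positivity)]
      ring
    have e5 : θ ^ (2 * γ) = θ ^ (γ + 1) * (θ ^ (1 - γ))⁻¹ := by
      rw [← Real.rpow_neg hθ.le, ← Real.rpow_add hθ, show γ + 1 + -(1 - γ) = 2 * γ by ring]
    calc μ * γ / θ ^ (γ + 1) * (∫ ξ in (0:ℝ)..θ, ξ ^ (2 * γ - 1) * Real.exp (-(μ * ξ ^ γ)))
        ≤ μ * γ / θ ^ (γ + 1) * (θ ^ (2 * γ) / (2 * γ)) := by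
          apply mul_le_mul_of_nonneg_left (hmono.trans_eq hval) (by positivity)
      _ = μ / (2 * θ ^ (1 - γ)) := by
          rw [e5]; field_simp
end

section
/- Let γ ∈ (0,1), μ > 0, and M(θ) = θ^{−γ} ∫₀^θ (1 − e^{−μξ^γ})/ξ^{1−γ} dξ. Then for all 0 < θ < θ', one has 0 ≤ M(θ') − M(θ) ≤ (μ / (2 θ^{1−γ})) (θ' − θ). -/
open Real Set intervalIntegral

theorem add_one_mul_exp_neg_le_one (x : ℝ) : (x + 1) * exp (-x) ≤ 1 := by
  calc (x + 1) * exp (-x) ≤ exp x * exp (-x) := by gcongr; exact add_one_le_exp x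
    _ = 1 := by rw [← exp_add, add_neg_cancel, exp_zero]

theorem one_sub_sq_div_two_le_add_one_mul_exp_neg {x : ℝ} (hx : 0 ≤ x) :
    1 - x ^ 2 / 2 ≤ (x + 1) * exp (-x) := by
  let ψ : ℝ → ℝ := fun x ↦ (x + 1) * exp (-x) + x ^ 2 / 2
  have hψ : ∀ x, HasDerivAt ψ (x * (1 - exp (-x))) x := fun x ↦ by
    refine ((((hasDerivAt_id x).add_const 1).mul (hasDerivAt_neg x).exp).add
      ((hasDerivAt_pow 2 x).div_const 2)).congr_deriv ?_
    simp only [id, Nat.cast_ofNat]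
    ring
  have hmono : MonotoneOn ψ (Ici 0) := by
    refine monotoneOn_of_hasDerivWithinAt_nonneg (convex_Ici 0)
      (fun y _ ↦ (hψ y).continuousAt.continuousWithinAt) (fun y _ ↦ (hψ y).hasDerivWithinAt) ?_
    intro y hy
    rw [interior_Ici, mem_Ioi] at hy
    exact mul_nonneg hy.le (sub_nonneg.2 (exp_le_one_iff.2 (by linarith)))
  have := hmono self_mem_Ici (mem_Ici.2 hx) hx
  simp only [ψ, zero_add, neg_zero, exp_zero, mul_one] at this
  linarith

theorem hasDerivAt_one_sub_exp_neg_div {x : ℝ} (hx : x ≠ 0) :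
    HasDerivAt (fun a ↦ (1 - exp (-a)) / a) (((x + 1) * exp (-x) - 1) / x ^ 2) x := by
  refine (((hasDerivAt_neg x).exp.const_sub 1).div (hasDerivAt_id x) hx).congr_deriv ?_
  simp only [id]
  ring

theorem antitoneOn_one_sub_exp_neg_div : AntitoneOn (fun a ↦ (1 - exp (-a)) / a) (Ioi 0) := by
  refine antitoneOn_of_hasDerivWithinAt_nonpos (convex_Ioi 0)
    (fun x hx ↦ (hasDerivAt_one_sub_exp_neg_div (ne_of_gt hx)).continuousAt.continuousWithinAt)
    (fun x hx ↦ (hasDerivAt_one_sub_exp_neg_div (ne_of_gt (interior_subset hx))).hasDerivWithinAt)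
    fun x _ ↦ ?_
  exact div_nonpos_of_nonpos_of_nonneg (sub_nonpos.2 (add_one_mul_exp_neg_le_one x)) (sq_nonneg x)

theorem one_sub_exp_neg_div_sub_le {a b : ℝ} (ha : 0 < a) (hab : a ≤ b) :
    (1 - exp (-a)) / a - (1 - exp (-b)) / b ≤ (b - a) / 2 := by
  have hderiv : ∀ x ≠ 0, HasDerivAt (fun a ↦ (1 - exp (-a)) / a + a / 2)
      (((x + 1) * exp (-x) - 1) / x ^ 2 + 1 / 2) x := fun x hx ↦
    (hasDerivAt_one_sub_exp_neg_div hx).add ((hasDerivAt_id x).div_const 2)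
  have hmono : MonotoneOn (fun a ↦ (1 - exp (-a)) / a + a / 2) (Ioi 0) := by
    refine monotoneOn_of_hasDerivWithinAt_nonneg (convex_Ioi 0)
      (fun x hx ↦ (hderiv x (ne_of_gt hx)).continuousAt.continuousWithinAt)
      (fun x hx ↦ (hderiv x (ne_of_gt (interior_subset hx))).hasDerivWithinAt) fun x hx ↦ ?_
    rw [interior_Ioi, mem_Ioi] at hx
    have hquad := one_sub_sq_div_two_le_add_one_mul_exp_neg hx.le
    have : -(1 / 2) ≤ ((x + 1) * exp (-x) - 1) / x ^ 2 := by
      rw [le_div_iff₀ (by positivity)]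
      linarith
    linarith
  have := hmono ha (ha.trans_le hab) hab
  simp only at this
  linarith

theorem rpow_sub_rpow_le_mul_rpow_sub_one_mul {x y p : ℝ} (hx : 0 < x) (hxy : x ≤ y)
    (hp₀ : 0 ≤ p) (hp₁ : p ≤ 1) : y ^ p - x ^ p ≤ p * x ^ (p - 1) * (y - x) := by
  rcases hxy.eq_or_lt with rfl | hlt
  · simp
  have := (concaveOn_rpow hp₀ hp₁).slope_le_of_hasDerivAt hx.le (hx.le.trans hlt.le) hlt
    (hasDerivAt_rpow_const (Or.inl hx.ne'))
  rwa [slope_def_field, div_le_iff₀ (sub_pos.2 hlt)] at this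

theorem Mfun_eq_of_pos {γ μ θ : ℝ} (hγ : 0 < γ) (hμ : 0 < μ) (hθ : 0 < θ) :
    Mfun γ μ θ = (1 - (1 - exp (-(μ * θ ^ γ))) / (μ * θ ^ γ)) / γ := by
  set F : ℝ → ℝ := fun x ↦ (x ^ γ - (1 - exp (-(μ * x ^ γ))) / μ) / γ
  have hF : ∀ x, 0 < x → HasDerivAt F ((1 - exp (-(μ * x ^ γ))) / x ^ (1 - γ)) x := by
    intro x hx
    have hpow := hasDerivAt_rpow_const (p := γ) (Or.inl hx.ne')
    refine ((hpow.sub (((hpow.const_mul μ).neg.exp.const_sub 1).div_const μ)).div_const γ)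
      |>.congr_deriv ?_
    rw [Pi.neg_apply, rpow_sub hx 1 γ, rpow_one, rpow_sub_one hx.ne']
    field_simp
  have hF_cont : Continuous F := by
    have := continuous_rpow_const hγ.le
    fun_prop
  have hint : ∫ ξ in (0:ℝ)..θ, (1 - exp (-(μ * ξ ^ γ))) / ξ ^ (1 - γ) = F θ - F 0 := by
    refine integral_eq_sub_of_hasDerivAt_of_le hθ.le hF_cont.continuousOn
      (fun x hx ↦ hF x hx.1) ?_
    -- the integrand is nonnegative, hence integrable as the derivative of `F`
    refine intervalIntegrable_deriv_of_nonneg hF_cont.continuousOn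
      (fun x hx ↦ hF x ?_) fun x hx ↦ ?_
    all_goals rw [min_eq_left hθ.le, max_eq_right hθ.le] at hx
    · exact hx.1
    · have hexp : exp (-(μ * x ^ γ)) ≤ 1 :=
        exp_le_one_iff.2 (neg_nonpos.2 (mul_nonneg hμ.le (rpow_nonneg hx.1.le γ)))
      exact div_nonneg (sub_nonneg.2 hexp) (rpow_nonneg hx.1.le _)
  have hF0 : F 0 = 0 := by simp [F, zero_rpow hγ.ne']
  rw [Mfun, hint, hF0, sub_zero, rpow_neg hθ.le]
  simp only [F]
  field_simp

theorem stmt9 (γ μ : ℝ) (hγ0 : 0 < γ) (hγ1 : γ < 1) (hμ : 0 < μ)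
    (θ θ' : ℝ) (hθ : 0 < θ) (hθ' : θ < θ') :
    0 ≤ Mfun γ μ θ' - Mfun γ μ θ ∧
    Mfun γ μ θ' - Mfun γ μ θ ≤ μ / (2 * θ ^ (1 - γ)) * (θ' - θ) := by
  have hθ'0 : 0 < θ' := hθ.trans hθ'
  set a := μ * θ ^ γ
  set b := μ * θ' ^ γ
  have ha : 0 < a := mul_pos hμ (rpow_pos_of_pos hθ γ)
  have hab : a ≤ b := mul_le_mul_of_nonneg_left (rpow_le_rpow hθ.le hθ'.le hγ0.le) hμ.le
  rw [Mfun_eq_of_pos hγ0 hμ hθ, Mfun_eq_of_pos hγ0 hμ hθ'0, ← sub_div, sub_sub_sub_cancel_left]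
  constructor
  · exact div_nonneg (sub_nonneg.2 (antitoneOn_one_sub_exp_neg_div ha (ha.trans_le hab) hab))
      hγ0.le
  calc _ ≤ (b - a) / 2 / γ := by gcongr; exact one_sub_exp_neg_div_sub_le ha hab
    _ = μ / (2 * γ) * (θ' ^ γ - θ ^ γ) := by field_simp; ring
    _ ≤ μ / (2 * γ) * (γ * θ ^ (γ - 1) * (θ' - θ)) := by
      gcongr
      exact rpow_sub_rpow_le_mul_rpow_sub_one_mul hθ hθ'.le hγ0.le hγ1.le
    _ = μ / (2 * θ ^ (1 - γ)) * (θ' - θ) := by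
      rw [show γ - 1 = -(1 - γ) by ring, rpow_neg hθ.le]
      field_simp
end

section
/- Let γ ∈ (0,1), μ > 0, T > 0, t ∈ [0,T], and r : [0,t] → ℝ continuous. Define v(τ) = (1/Γ(1−γ)) ∫₀^τ e^{−μ(τ−ξ)^γ} r(ξ)/(τ−ξ)^γ dξ for τ ∈ [0,t]. Then for all τ, τ' ∈ [0,t], |v(τ') − v(τ)| ≤ (‖r‖_{[0,t]} / Γ(2−γ)) |τ' − τ|^{1−γ} + (T^{1−γ}/Γ(2−γ)) κ(|τ' − τ|), where ‖r‖_{[0,t]} = max_{ξ∈[0,t]} |r(ξ)| and κ is the modulus of continuity of r on [0,t]. -/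
/-!
Substituting `s = τ - ξ` writes `v τ` as `Γ(1-γ)⁻¹ ∫₀^τ k s * r (τ - s) ds` with `|k s| ≤ s^(-γ)`.
For `τ ≤ τ'` the difference of the two integrals is
`∫₀^τ k s * (r (τ' - s) - r (τ - s)) ds + ∫_τ^τ' k s * r (τ' - s) ds`.
The first term is at most `κ(τ' - τ) τ^(1-γ) / (1-γ)`, the second at most
`‖r‖ (τ'^(1-γ) - τ^(1-γ)) / (1-γ) ≤ ‖r‖ (τ' - τ)^(1-γ) / (1-γ)` by subadditivity of `x ↦ x^(1-γ)`;
finally `(1-γ) Γ(1-γ) = Γ(2-γ)`.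
-/

open MeasureTheory Set

lemma Real.rpow_sub_rpow_le_sub_rpow {a b p : ℝ} (ha : 0 ≤ a) (hab : a ≤ b) (hp : 0 ≤ p)
    (hp1 : p ≤ 1) : b ^ p - a ^ p ≤ (b - a) ^ p := by
  have h := Real.rpow_add_le_add_rpow (sub_nonneg.2 hab) ha hp hp1
  rw [sub_add_cancel] at h
  linarith

section RpowNegBound

variable {γ C a b : ℝ} {f : ℝ → ℝ}

lemma intervalIntegrable_of_abs_le_mul_rpow_neg (hγ : γ < 1) (hab : a ≤ b)
    (hf : ContinuousOn f (Ioc a b)) (hbound : ∀ s ∈ Ioc a b, |f s| ≤ C * s ^ (-γ)) :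
    IntervalIntegrable f volume a b := by
  rw [intervalIntegrable_iff_integrableOn_Ioc_of_le hab]
  refine Integrable.mono' ((intervalIntegral.intervalIntegrable_rpow' (r := -γ)
    (by linarith)).const_mul C).1 (hf.aestronglyMeasurable measurableSet_Ioc) ?_
  filter_upwards [ae_restrict_mem measurableSet_Ioc] with s hs using hbound s hs

lemma abs_integral_le_of_abs_le_mul_rpow_neg (hγ : γ < 1) (hab : a ≤ b)
    (hbound : ∀ s ∈ Ioc a b, |f s| ≤ C * s ^ (-γ)) :
    |∫ s in a..b, f s| ≤ C * ((b ^ (1 - γ) - a ^ (1 - γ)) / (1 - γ)) :=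
  calc |∫ s in a..b, f s| = ‖∫ s in a..b, f s‖ := (Real.norm_eq_abs _).symm
    _ ≤ ∫ s in a..b, C * s ^ (-γ) :=
        intervalIntegral.norm_integral_le_of_norm_le hab (ae_of_all _ hbound)
          ((intervalIntegral.intervalIntegrable_rpow' (r := -γ) (by linarith)).const_mul C)
    _ = C * ((b ^ (1 - γ) - a ^ (1 - γ)) / (1 - γ)) := by
        rw [intervalIntegral.integral_const_mul, integral_rpow (.inl (by linarith)),
          neg_add_eq_sub]

end RpowNegBound

section WeaklySingularKernel

variable {k r : ℝ → ℝ} {γ t R K a b : ℝ}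

lemma abs_kernel_mul_le (hk : ∀ s > 0, |k s| ≤ s ^ (-γ)) {s x M : ℝ} (hs : 0 < s)
    (hx : |x| ≤ M) : |k s * x| ≤ M * s ^ (-γ) := by
  rw [abs_mul, mul_comm M]
  exact mul_le_mul (hk s hs) hx (abs_nonneg _) (Real.rpow_nonneg hs.le _)

lemma intervalIntegrable_kernel_mul_comp_sub (hγ : γ < 1) (hk_cont : ContinuousOn k (Ioi 0))
    (hk : ∀ s > 0, |k s| ≤ s ^ (-γ)) (hr : ContinuousOn r (Icc 0 t))
    (hR : ∀ ξ ∈ Icc 0 t, |r ξ| ≤ R) {c : ℝ} (ha : 0 ≤ a) (hab : a ≤ b) (hbc : b ≤ c)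
    (hct : c ≤ t) : IntervalIntegrable (fun s => k s * r (c - s)) volume a b := by
  have hmaps : MapsTo (fun s => c - s) (Ioc a b) (Icc 0 t) := fun s hs =>
    ⟨by linarith [hs.2], by linarith [hs.1]⟩
  refine intervalIntegrable_of_abs_le_mul_rpow_neg hγ hab ?_
    fun s hs => abs_kernel_mul_le hk (ha.trans_lt hs.1) (hR _ (hmaps hs))
  exact (hk_cont.mono fun s hs => ha.trans_lt hs.1).mul
    (hr.comp (continuous_const.sub continuous_id).continuousOn hmaps)

theorem abs_integral_kernel_sub_integral_kernel_le (hγ0 : 0 ≤ γ) (hγ : γ < 1)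
    (hk_cont : ContinuousOn k (Ioi 0)) (hk : ∀ s > 0, |k s| ≤ s ^ (-γ))
    (hr : ContinuousOn r (Icc 0 t)) (hR : ∀ ξ ∈ Icc 0 t, |r ξ| ≤ R)
    (hK : ∀ ξ ∈ Icc 0 t, ∀ ξ' ∈ Icc 0 t, |ξ - ξ'| ≤ b - a → |r ξ - r ξ'| ≤ K)
    (ha : 0 ≤ a) (hab : a ≤ b) (hbt : b ≤ t) :
    |(∫ ξ in 0..b, k (b - ξ) * r ξ) - ∫ ξ in 0..a, k (a - ξ) * r ξ| ≤
      (R * (b - a) ^ (1 - γ) + K * a ^ (1 - γ)) / (1 - γ) := by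
  have hp : 0 < 1 - γ := by linarith
  have hR0 : 0 ≤ R := (abs_nonneg _).trans (hR 0 ⟨le_rfl, by linarith⟩)
  have hflip : ∀ c, (∫ ξ in 0..c, k (c - ξ) * r ξ) = ∫ s in 0..c, k s * r (c - s) := fun c => by
    simpa using intervalIntegral.integral_comp_sub_left (a := 0) (b := c)
      (fun s => k s * r (c - s)) c
  have hint : ∀ {x y c : ℝ}, 0 ≤ x → x ≤ y → y ≤ c → c ≤ t →
      IntervalIntegrable (fun s => k s * r (c - s)) volume x y :=
    intervalIntegrable_kernel_mul_comp_sub hγ hk_cont hk hr hR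
  have hsplit : (∫ s in 0..b, k s * r (b - s)) - ∫ s in 0..a, k s * r (a - s) =
      (∫ s in 0..a, k s * (r (b - s) - r (a - s))) + ∫ s in a..b, k s * r (b - s) := by
    rw [← intervalIntegral.integral_add_adjacent_intervals
        (hint le_rfl ha hab hbt) (hint ha hab le_rfl hbt)]
    simp only [mul_sub]
    rw [intervalIntegral.integral_sub (hint le_rfl ha hab hbt)
      (hint le_rfl ha le_rfl (hab.trans hbt))]
    ring
  have hnear : |∫ s in 0..a, k s * (r (b - s) - r (a - s))| ≤ K * a ^ (1 - γ) / (1 - γ) := by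
    have h := abs_integral_le_of_abs_le_mul_rpow_neg hγ ha fun s hs =>
      abs_kernel_mul_le hk hs.1 (hK (b - s) ⟨by linarith [hs.2], by linarith [hs.1]⟩
        (a - s) ⟨by linarith [hs.2], by linarith [hs.1]⟩ (by rw [sub_sub_sub_cancel_right,
          abs_of_nonneg (sub_nonneg.2 hab)]))
    rwa [Real.zero_rpow hp.ne', sub_zero, ← mul_div_assoc] at h
  have hfar : |∫ s in a..b, k s * r (b - s)| ≤ R * (b - a) ^ (1 - γ) / (1 - γ) := by
    calc _ ≤ R * ((b ^ (1 - γ) - a ^ (1 - γ)) / (1 - γ)) :=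
          abs_integral_le_of_abs_le_mul_rpow_neg hγ hab fun s hs => abs_kernel_mul_le hk
            (ha.trans_lt hs.1) (hR _ ⟨by linarith [hs.2], by linarith [hs.1]⟩)
      _ ≤ R * ((b - a) ^ (1 - γ) / (1 - γ)) := by
          gcongr
          exact Real.rpow_sub_rpow_le_sub_rpow ha hab hp.le (by linarith)
      _ = R * (b - a) ^ (1 - γ) / (1 - γ) := by ring
  rw [hflip, hflip, hsplit, add_div, add_comm (R * _ / _)]
  exact (abs_add_le _ _).trans (add_le_add hnear hfar)

end WeaklySingularKernel

lemma continuousOn_exp_neg_mul_rpow_div_rpow (μ γ : ℝ) :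
    ContinuousOn (fun s : ℝ => Real.exp (-(μ * s ^ γ)) / s ^ γ) (Ioi 0) := by
  have hpow : ContinuousOn (fun s : ℝ => s ^ γ) (Ioi 0) := fun s hs =>
    (Real.continuousAt_rpow_const s γ (.inl (ne_of_gt hs))).continuousWithinAt
  exact (by fun_prop : ContinuousOn _ _).div hpow fun s hs => (Real.rpow_pos_of_pos hs γ).ne'

lemma abs_exp_neg_mul_rpow_div_rpow_le {μ γ s : ℝ} (hμ : 0 ≤ μ) (hs : 0 < s) :
    |Real.exp (-(μ * s ^ γ)) / s ^ γ| ≤ s ^ (-γ) := by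
  have hsγ : 0 < s ^ γ := Real.rpow_pos_of_pos hs γ
  rw [abs_of_nonneg (by positivity), Real.rpow_neg hs.le, div_eq_mul_inv]
  exact mul_le_of_le_one_left (by positivity) (Real.exp_le_one_iff.2 (by nlinarith))

theorem stmt10_general (γ μ T t : ℝ) (hγ0 : 0 < γ) (hγ1 : γ < 1) (hμ : 0 < μ)
    (ht : t ∈ Icc 0 T)
    (r : ℝ → ℝ) (hr : ContinuousOn r (Icc 0 t))
    (R : ℝ) (hR : IsGreatest {y | ∃ ξ ∈ Icc (0:ℝ) t, y = |r ξ|} R)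
    (κ : ℝ → ℝ)
    (hκ : ∀ δ ≥ (0:ℝ), IsGreatest
      {y | ∃ ξ ∈ Icc (0:ℝ) t, ∃ ξ' ∈ Icc (0:ℝ) t, |ξ - ξ'| ≤ δ ∧ y = |r ξ - r ξ'|} (κ δ))
    (v : ℝ → ℝ)
    (hv : ∀ τ, v τ = (Real.Gamma (1 - γ))⁻¹ *
      ∫ ξ in (0:ℝ)..τ, Real.exp (-(μ * (τ - ξ) ^ γ)) * r ξ / (τ - ξ) ^ γ)
    (τ τ' : ℝ) (hτ : τ ∈ Icc 0 t) (hτ' : τ' ∈ Icc 0 t) :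
    |v τ' - v τ| ≤ R / Real.Gamma (2 - γ) * |τ' - τ| ^ (1 - γ) +
      T ^ (1 - γ) / Real.Gamma (2 - γ) * κ |τ' - τ| := by
  wlog hle : τ ≤ τ' generalizing τ τ'
  · rw [abs_sub_comm, abs_sub_comm τ']
    exact this τ' τ hτ' hτ (le_of_not_ge hle)
  have hp : 0 < 1 - γ := by linarith
  have hΓ : 0 < Real.Gamma (1 - γ) := Real.Gamma_pos_of_pos hp
  have hΓ2 : Real.Gamma (2 - γ) = (1 - γ) * Real.Gamma (1 - γ) := by
    rw [show 2 - γ = 1 - γ + 1 by ring, Real.Gamma_add_one hp.ne']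
  have hκ_mem := hκ (τ' - τ) (sub_nonneg.2 hle)
  have hκ0 : 0 ≤ κ (τ' - τ) :=
    (abs_nonneg _).trans (hκ_mem.2 ⟨τ, hτ, τ, hτ, by simpa using hle, rfl⟩)
  have hest := abs_integral_kernel_sub_integral_kernel_le hγ0.le hγ1
    (continuousOn_exp_neg_mul_rpow_div_rpow μ γ)
    (fun s hs => abs_exp_neg_mul_rpow_div_rpow_le hμ.le hs) hr
    (fun ξ hξ => hR.2 ⟨ξ, hξ, rfl⟩) (fun ξ hξ ξ' hξ' h => hκ_mem.2 ⟨ξ, hξ, ξ', hξ', h, rfl⟩)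
    hτ.1 hle hτ'.2
  simp only [mul_div_right_comm _ (r _)] at hv
  rw [abs_of_nonneg (sub_nonneg.2 hle), hv, hv, ← mul_sub, abs_mul, abs_inv, abs_of_pos hΓ]
  have hτT : τ ^ (1 - γ) ≤ T ^ (1 - γ) := Real.rpow_le_rpow hτ.1 (hτ.2.trans ht.2) hp.le
  calc _ ≤ (Real.Gamma (1 - γ))⁻¹ *
        ((R * (τ' - τ) ^ (1 - γ) + κ (τ' - τ) * T ^ (1 - γ)) / (1 - γ)) := by
        gcongr
        exact hest.trans (by gcongr)
    _ = _ := by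
        rw [hΓ2]
        field_simp

theorem stmt10 (γ μ T t : ℝ) (hγ0 : 0 < γ) (hγ1 : γ < 1) (hμ : 0 < μ)
    (hT : 0 < T) (ht : t ∈ Icc 0 T)
    (r : ℝ → ℝ) (hr : ContinuousOn r (Icc 0 t))
    (R : ℝ) (hR : IsGreatest {y | ∃ ξ ∈ Icc (0:ℝ) t, y = |r ξ|} R)
    (κ : ℝ → ℝ)
    (hκ : ∀ δ ≥ (0:ℝ), IsGreatest
      {y | ∃ ξ ∈ Icc (0:ℝ) t, ∃ ξ' ∈ Icc (0:ℝ) t, |ξ - ξ'| ≤ δ ∧ y = |r ξ - r ξ'|} (κ δ))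
    (v : ℝ → ℝ)
    (hv : ∀ τ, v τ = (Real.Gamma (1 - γ))⁻¹ *
      ∫ ξ in (0:ℝ)..τ, Real.exp (-(μ * (τ - ξ) ^ γ)) * r ξ / (τ - ξ) ^ γ)
    (τ τ' : ℝ) (hτ : τ ∈ Icc 0 t) (hτ' : τ' ∈ Icc 0 t) :
    |v τ' - v τ| ≤ R / Real.Gamma (2 - γ) * |τ' - τ| ^ (1 - γ) +
      T ^ (1 - γ) / Real.Gamma (2 - γ) * κ |τ' - τ| :=
  stmt10_general γ μ T t hγ0 hγ1 hμ ht r hr R hR κ hκ v hv τ τ' hτ hτ'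
end

section
/- Let γ ∈ (0,1), μ > 0, T > 0, and r : [0,T] → ℝ continuous with ‖r‖_{[0,T]} = max |r|. Define v₃(t) = ∫₀^t M(t−τ) r(τ) dτ with M(θ) = θ^{−γ} ∫₀^θ (1 − e^{−μξ^γ})/ξ^{1−γ} dξ. Then v₃ is Lipschitz continuous on [0,T] with Lipschitz constant L = (γ+2) μ ‖r‖_{[0,T]} T^γ / (2(γ+1)γ). -/
/-!
The substitution `ξ = θ u` gives `M(θ) = G(μ θ^γ)` with
`G(x) = ∫₀¹ u^(γ-1) (1 - e^(-x u^γ)) du`, which is nondecreasing in `x ≥ 0` and bounded by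
`x / (2γ)` because `1 - e^(-a) ≤ a`. Hence `M` is nonnegative, nondecreasing and
`M ≤ μ T^γ / (2γ)` on `[0, T]`.

For any such kernel `K`, splitting `v(s') - v(s)` at `s` and bounding `|r|` by `R` leaves
`R (∫₀^{s'} K - ∫₀^s K) = R ∫ₛ^{s'} K ≤ R (s' - s) sup K`, because the increments
`K(s' - τ) - K(s - τ)` are nonnegative. The constant `μ R T^γ / (2γ)` obtained this way is
below the claimed one since `(γ + 2) / (γ + 1) > 1`.
-/

open MeasureTheory Set

noncomputable def Gfun (γ x : ℝ) : ℝ :=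
  ∫ u in (0:ℝ)..1, u ^ (γ - 1) * (1 - Real.exp (-(x * u ^ γ)))

lemma intervalIntegrable_Gfun_integrand {γ : ℝ} (hγ : 0 < γ) (x : ℝ) :
    IntervalIntegrable (fun u : ℝ => u ^ (γ - 1) * (1 - Real.exp (-(x * u ^ γ)))) volume 0 1 :=
  (intervalIntegral.intervalIntegrable_rpow' (by linarith)).mul_continuousOn
    (by fun_prop (disch := exact hγ.le))

lemma Gfun_monotoneOn {γ : ℝ} (hγ : 0 < γ) : MonotoneOn (Gfun γ) (Ici 0) := by
  intro x _ y _ hxy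
  refine intervalIntegral.integral_mono_on zero_le_one (intervalIntegrable_Gfun_integrand hγ x)
    (intervalIntegrable_Gfun_integrand hγ y) fun u hu => ?_
  have := Real.rpow_nonneg hu.1 γ
  gcongr
  exact Real.rpow_nonneg hu.1 _

lemma Gfun_le {γ : ℝ} (hγ : 0 < γ) (x : ℝ) : Gfun γ x ≤ x / (2 * γ) := by
  have hint : ∫ u in (0:ℝ)..1, x * u ^ (2 * γ - 1) = x / (2 * γ) := by
    rw [intervalIntegral.integral_const_mul, integral_rpow (Or.inl (by linarith)),
      sub_add_cancel, Real.one_rpow, Real.zero_rpow (by positivity)]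
    ring
  rw [Gfun, ← hint]
  refine intervalIntegral.integral_mono_on_of_le_Ioo zero_le_one
    (intervalIntegrable_Gfun_integrand hγ x)
    ((intervalIntegral.intervalIntegrable_rpow' (by linarith)).const_mul x) fun u hu => ?_
  have h1 : 1 - Real.exp (-(x * u ^ γ)) ≤ x * u ^ γ := by
    linarith [Real.add_one_le_exp (-(x * u ^ γ))]
  calc u ^ (γ - 1) * (1 - Real.exp (-(x * u ^ γ))) ≤ u ^ (γ - 1) * (x * u ^ γ) := by
        gcongr; exact Real.rpow_nonneg hu.1.le _
    _ = x * u ^ (2 * γ - 1) := by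
        rw [show 2 * γ - 1 = (γ - 1) + γ by ring, Real.rpow_add hu.1]; ring

lemma Mfun_eq_Gfun {γ μ θ : ℝ} (hγ : γ ≠ 0) (hθ : 0 ≤ θ) :
    Mfun γ μ θ = Gfun γ (μ * θ ^ γ) := by
  rcases hθ.eq_or_lt with rfl | hθ
  · simp [Mfun, Gfun, Real.zero_rpow hγ]
  have hsubst := intervalIntegral.smul_integral_comp_mul_left (a := 0) (b := 1)
    (fun ξ => (1 - Real.exp (-(μ * ξ ^ γ))) / ξ ^ (1 - γ)) θ
  rw [mul_zero, mul_one, smul_eq_mul] at hsubst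
  rw [Mfun, ← hsubst, ← mul_assoc, ← intervalIntegral.integral_const_mul, Gfun]
  refine intervalIntegral.integral_congr_ae (Filter.Eventually.of_forall fun u hu => ?_)
  rw [uIoc_of_le zero_le_one] at hu
  have hu0 := hu.1
  rw [Real.mul_rpow hθ.le hu0.le, Real.mul_rpow hθ.le hu0.le, Real.rpow_sub hθ,
    Real.rpow_sub hu0, Real.rpow_sub hu0, Real.rpow_neg hθ.le, Real.rpow_one, Real.rpow_one]
  field_simp

lemma Mfun_monotoneOn {γ μ : ℝ} (hγ : 0 < γ) (hμ : 0 ≤ μ) : MonotoneOn (Mfun γ μ) (Ici 0) := by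
  intro θ hθ θ' hθ' hle
  rw [Mfun_eq_Gfun hγ.ne' hθ, Mfun_eq_Gfun hγ.ne' hθ']
  exact Gfun_monotoneOn hγ (mul_nonneg hμ (Real.rpow_nonneg hθ _))
    (mul_nonneg hμ (Real.rpow_nonneg hθ' _)) (by gcongr)

lemma Mfun_le {γ μ θ : ℝ} (hγ : 0 < γ) (hθ : 0 ≤ θ) : Mfun γ μ θ ≤ μ * θ ^ γ / (2 * γ) :=
  Mfun_eq_Gfun hγ.ne' hθ ▸ Gfun_le hγ _

section Convolution

variable {K r : ℝ → ℝ} {R : ℝ}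

lemma intervalIntegrable_comp_sub_of_monotoneOn (hK : MonotoneOn K (Ici 0)) {a b c : ℝ}
    (hab : a ≤ b) (hbc : b ≤ c) : IntervalIntegrable (fun τ => K (c - τ)) volume a b := by
  refine AntitoneOn.intervalIntegrable fun τ hτ τ' hτ' hle => hK ?_ ?_ (by linarith)
  · rw [uIcc_of_le hab] at hτ'; simp only [mem_Ici]; linarith [hτ'.2]
  · rw [uIcc_of_le hab] at hτ; simp only [mem_Ici]; linarith [hτ.2]

lemma integral_comp_sub_sub_integral_comp_sub {s s' : ℝ} (h : IntervalIntegrable K volume 0 s)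
    (h' : IntervalIntegrable K volume 0 s') :
    (∫ τ in 0..s', K (s' - τ)) - ∫ τ in 0..s, K (s - τ) = ∫ θ in s..s', K θ := by
  rw [intervalIntegral.integral_comp_sub_left K s', intervalIntegral.integral_comp_sub_left K s,
    sub_self, sub_self, sub_zero, sub_zero, intervalIntegral.integral_interval_sub_left h' h]

lemma abs_integral_comp_sub_mul_sub_le (hK : MonotoneOn K (Ici 0)) (hK0 : 0 ≤ K 0)
    {s s' : ℝ} (hr : ContinuousOn r (Icc 0 s')) (hR : ∀ τ ∈ Icc 0 s', |r τ| ≤ R)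
    (hs : 0 ≤ s) (hss' : s ≤ s') :
    |(∫ τ in 0..s', K (s' - τ) * r τ) - ∫ τ in 0..s, K (s - τ) * r τ| ≤
      R * ∫ θ in s..s', K θ := by
  have hs' : 0 ≤ s' := hs.trans hss'
  have hKs := intervalIntegrable_comp_sub_of_monotoneOn hK hs le_rfl
  have hKs'₁ := intervalIntegrable_comp_sub_of_monotoneOn hK hs hss'
  have hKs'₂ := intervalIntegrable_comp_sub_of_monotoneOn hK hss' le_rfl
  have hr_on {a b : ℝ} (ha : 0 ≤ a) (hab : a ≤ b) (hb : b ≤ s') : ContinuousOn r (uIcc a b) :=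
    hr.mono (by rw [uIcc_of_le hab]; exact Icc_subset_Icc ha hb)
  have hf₁ := hKs'₁.mul_continuousOn (hr_on le_rfl hs hss')
  have hf₂ := hKs'₂.mul_continuousOn (hr_on hs hss' le_rfl)
  have hdiff : ∀ᵐ τ, τ ∈ Ioc 0 s →
      ‖K (s' - τ) * r τ - K (s - τ) * r τ‖ ≤ R * (K (s' - τ) - K (s - τ)) := by
    refine Filter.Eventually.of_forall fun τ hτ => ?_
    have hmono : K (s - τ) ≤ K (s' - τ) :=
      hK (by simp only [mem_Ici]; linarith [hτ.2]) (by simp only [mem_Ici]; linarith [hτ.2])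
        (by linarith)
    rw [Real.norm_eq_abs, ← sub_mul, abs_mul, abs_of_nonneg (sub_nonneg.mpr hmono), mul_comm]
    gcongr
    exact hR τ ⟨hτ.1.le, hτ.2.trans hss'⟩
  have htail : ∀ᵐ τ, τ ∈ Ioc s s' → ‖K (s' - τ) * r τ‖ ≤ R * K (s' - τ) := by
    refine Filter.Eventually.of_forall fun τ hτ => ?_
    have hK_nonneg : 0 ≤ K (s' - τ) :=
      hK0.trans (hK (mem_Ici.mpr le_rfl) (by simp only [mem_Ici]; linarith [hτ.2])
        (by linarith [hτ.2]))
    rw [Real.norm_eq_abs, abs_mul, abs_of_nonneg hK_nonneg, mul_comm]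
    gcongr
    exact hR τ ⟨hs.trans hτ.1.le, hτ.2⟩
  calc |(∫ τ in 0..s', K (s' - τ) * r τ) - ∫ τ in 0..s, K (s - τ) * r τ|
      = |(∫ τ in 0..s, (K (s' - τ) * r τ - K (s - τ) * r τ)) +
          ∫ τ in s..s', K (s' - τ) * r τ| := by
        rw [intervalIntegral.integral_sub hf₁ (hKs.mul_continuousOn (hr_on le_rfl hs hss')),
          ← intervalIntegral.integral_add_adjacent_intervals hf₁ hf₂]
        ring_nf
    _ ≤ (∫ τ in 0..s, R * (K (s' - τ) - K (s - τ))) + ∫ τ in s..s', R * K (s' - τ) :=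
        (abs_add_le _ _).trans (add_le_add
          (intervalIntegral.norm_integral_le_of_norm_le hs hdiff ((hKs'₁.sub hKs).const_mul R))
          (intervalIntegral.norm_integral_le_of_norm_le hss' htail (hKs'₂.const_mul R)))
    _ = R * ((∫ τ in 0..s', K (s' - τ)) - ∫ τ in 0..s, K (s - τ)) := by
        rw [intervalIntegral.integral_const_mul, intervalIntegral.integral_const_mul,
          intervalIntegral.integral_sub hKs'₁ hKs,
          ← intervalIntegral.integral_add_adjacent_intervals hKs'₁ hKs'₂]
        ring
    _ = R * ∫ θ in s..s', K θ := by
        rw [integral_comp_sub_sub_integral_comp_sub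
          (hK.mono (uIcc_of_le hs ▸ Icc_subset_Ici_self)).intervalIntegrable
          (hK.mono (uIcc_of_le hs' ▸ Icc_subset_Ici_self)).intervalIntegrable]

lemma abs_integral_comp_sub_mul_sub_le_mul_abs (hK : MonotoneOn K (Ici 0)) (hK0 : 0 ≤ K 0)
    {T C : ℝ} (hKC : ∀ θ ∈ Icc 0 T, K θ ≤ C) (hr : ContinuousOn r (Icc 0 T))
    (hR : ∀ τ ∈ Icc 0 T, |r τ| ≤ R) {s s' : ℝ} (hs : s ∈ Icc 0 T) (hs' : s' ∈ Icc 0 T) :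
    |(∫ τ in 0..s', K (s' - τ) * r τ) - ∫ τ in 0..s, K (s - τ) * r τ| ≤ R * C * |s' - s| := by
  wlog hss' : s ≤ s' generalizing s s'
  · rw [abs_sub_comm, abs_sub_comm s']
    exact this hs' hs (le_of_not_ge hss')
  have hR0 : 0 ≤ R := (abs_nonneg _).trans (hR s hs)
  have hKC' : ∫ θ in s..s', K θ ≤ C * (s' - s) := by
    simpa [mul_comm] using intervalIntegral.integral_mono_on (μ := volume) hss'
      (hK.mono (uIcc_of_le hss' ▸ (Icc_subset_Ici_self.trans (Ici_subset_Ici.mpr hs.1)))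
        ).intervalIntegrable intervalIntegrable_const
      fun θ hθ => hKC θ ⟨hs.1.trans hθ.1, hθ.2.trans hs'.2⟩
  calc _ ≤ R * ∫ θ in s..s', K θ :=
        abs_integral_comp_sub_mul_sub_le hK hK0 (hr.mono (Icc_subset_Icc le_rfl hs'.2))
          (fun τ hτ => hR τ ⟨hτ.1, hτ.2.trans hs'.2⟩) hs.1 hss'
    _ ≤ R * (C * (s' - s)) := by gcongr
    _ = R * C * |s' - s| := by rw [abs_of_nonneg (sub_nonneg.mpr hss'), mul_assoc]

end Convolution

theorem stmt11_general (γ μ T : ℝ) (hγ0 : 0 < γ) (hμ : 0 < μ)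
    (r : ℝ → ℝ) (hr : ContinuousOn r (Icc 0 T))
    (R : ℝ) (hR : IsGreatest {y | ∃ ξ ∈ Icc (0:ℝ) T, y = |r ξ|} R)
    (v₃ : ℝ → ℝ) (hv₃ : ∀ s, v₃ s = ∫ τ in (0:ℝ)..s, Mfun γ μ (s - τ) * r τ) :
    ∀ s ∈ Icc (0:ℝ) T, ∀ s' ∈ Icc (0:ℝ) T,
      |v₃ s' - v₃ s| ≤ ((γ + 2) * μ * R * T ^ γ / (2 * (γ + 1) * γ)) * |s' - s| := by
  intro s hs s' hs'
  have hT : 0 ≤ T := hs.1.trans hs.2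
  have hR_bound : ∀ τ ∈ Icc 0 T, |r τ| ≤ R := fun τ hτ => hR.2 ⟨τ, hτ, rfl⟩
  have hR0 : 0 ≤ R := (abs_nonneg _).trans (hR_bound s hs)
  have hM_bound : ∀ θ ∈ Icc 0 T, Mfun γ μ θ ≤ μ * T ^ γ / (2 * γ) := fun θ ⟨hθ0, hθT⟩ =>
    (Mfun_le hγ0 hθ0).trans (by gcongr)
  rw [hv₃, hv₃]
  refine (abs_integral_comp_sub_mul_sub_le_mul_abs (Mfun_monotoneOn hγ0 hμ.le) (by simp [Mfun])
    hM_bound hr hR_bound hs hs').trans ?_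
  have hconst : R * (μ * T ^ γ / (2 * γ)) = (γ + 1) * μ * R * T ^ γ / (2 * (γ + 1) * γ) := by
    field_simp
  rw [hconst]
  gcongr
  linarith

theorem stmt11 (γ μ T : ℝ) (hγ0 : 0 < γ) (hγ1 : γ < 1) (hμ : 0 < μ) (hT : 0 < T)
    (r : ℝ → ℝ) (hr : ContinuousOn r (Icc 0 T))
    (R : ℝ) (hR : IsGreatest {y | ∃ ξ ∈ Icc (0:ℝ) T, y = |r ξ|} R)
    (v₃ : ℝ → ℝ) (hv₃ : ∀ s, v₃ s = ∫ τ in (0:ℝ)..s, Mfun γ μ (s - τ) * r τ) :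
    ∀ s ∈ Icc (0:ℝ) T, ∀ s' ∈ Icc (0:ℝ) T,
      |v₃ s' - v₃ s| ≤ ((γ + 2) * μ * R * T ^ γ / (2 * (γ + 1) * γ)) * |s' - s| :=
  stmt11_general γ μ T hγ0 hμ r hr R hR v₃ hv₃
end

section
/- Let γ ∈ (0,1), μ > 0, r : [0,T] → ℝ continuous, M(θ) = θ^{−γ} ∫₀^θ (1 − e^{−μξ^γ})/ξ^{1−γ} dξ, and v₃(t) = ∫₀^t M(t−τ) r(τ) dτ. Then for every t ∈ (0,T), the right-hand derivative of v₃ at t exists and equals ∫₀^t M'(t−τ) r(τ) dτ = μγ ∫₀^t (r(τ)/(t−τ)^{γ+1}) ∫₀^{t−τ} ξ^{2γ−1} e^{−μξ^γ} dξ dτ. -/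
open MeasureTheory Set

/-!
Integration by parts gives `M(θ) = (1 - e^(-μθ^γ))/γ - μ θ^(-γ) K(θ)` with
`K(θ) = ∫₀^θ ξ^(2γ-1) e^(-μξ^γ) dξ`, hence `M'(θ) = μγ θ^(-γ-1) K(θ)`, and `K(θ) ≤ θ^(2γ)/(2γ)`
yields `0 ≤ M' ≤ μ θ^(γ-1)/2` and `0 ≤ M ≤ μ θ^γ/γ`.
For `s ↓ t` the difference quotient of `v₃` splits into `∫₀^t (M(s-τ) - M(t-τ))/(s-t) r(τ) dτ`
and the boundary term `(s-t)⁻¹ ∫ₜ^s M(s-τ) r(τ) dτ = O((s-t)^γ)`. By the mean value theorem the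
integrand of the first is `M'(c) r(τ)` with `c > t - τ`, dominated by `C (t-τ)^(γ-1)` since `γ ≤ 1`,
so dominated convergence gives the limit `∫₀^t M'(t-τ) r(τ) dτ`.
-/

open Filter Topology

theorem slope_intervalIntegral_eq {F : ℝ → ℝ → ℝ} {a t s : ℝ}
    (hs : IntervalIntegrable (F s) volume a s) (ht : IntervalIntegrable (F t) volume a t)
    (hts : t ∈ uIcc a s) :
    slope (fun s => ∫ τ in a..s, F s τ) t s =
      (∫ τ in a..t, (F s τ - F t τ) / (s - t)) + (∫ τ in t..s, F s τ) / (s - t) := by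
  have hs₁ : IntervalIntegrable (F s) volume a t := hs.mono_set (uIcc_subset_uIcc_left hts)
  have hs₂ : IntervalIntegrable (F s) volume t s := hs.mono_set (uIcc_subset_uIcc_right hts)
  rw [slope_def_field, ← intervalIntegral.integral_add_adjacent_intervals hs₁ hs₂,
    intervalIntegral.integral_div, intervalIntegral.integral_sub hs₁ ht]
  ring

section ConvolutionKernel

variable {M r : ℝ → ℝ} {γ C C' T t : ℝ}

theorem intervalIntegrable_of_norm_le_rpow (hγ : -1 < γ) (hM : ContinuousOn M (Ioi 0))
    (hM_le : ∀ θ > 0, ‖M θ‖ ≤ C * θ ^ γ) {a : ℝ} (ha : 0 ≤ a) :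
    IntervalIntegrable M volume 0 a := by
  refine ((intervalIntegral.intervalIntegrable_rpow' hγ).const_mul C).mono_fun' ?_ ?_
  · rw [uIoc_of_le ha]
    exact (hM.mono fun θ hθ => hθ.1).aestronglyMeasurable measurableSet_Ioc
  · rw [uIoc_of_le ha]
    filter_upwards [ae_restrict_mem measurableSet_Ioc] with θ hθ using hM_le θ hθ.1

theorem intervalIntegrable_comp_sub_mul (hγ : -1 < γ) (hM : ContinuousOn M (Ioi 0))
    (hM_le : ∀ θ > 0, ‖M θ‖ ≤ C * θ ^ γ) (hr : ContinuousOn r (Icc 0 T)) {s : ℝ}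
    (hs : 0 ≤ s) (hsT : s ≤ T) :
    IntervalIntegrable (fun τ => M (s - τ) * r τ) volume 0 s := by
  have hM_s := ((intervalIntegrable_of_norm_le_rpow hγ hM hM_le hs).comp_sub_left s).symm
  rw [sub_zero, sub_self] at hM_s
  exact hM_s.mul_continuousOn (hr.mono (by rw [uIcc_of_le hs]; exact Icc_subset_Icc_right hsT))

theorem norm_slope_le_rpow (hγ1 : γ ≤ 1) (hM : ∀ θ > 0, DifferentiableAt ℝ M θ)
    (hM'_le : ∀ θ > 0, ‖deriv M θ‖ ≤ C' * θ ^ (γ - 1)) {a b : ℝ} (ha : 0 < a) (hab : a < b) :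
    ‖slope M a b‖ ≤ C' * a ^ (γ - 1) := by
  have hC' : 0 ≤ C' := (norm_nonneg _).trans ((hM'_le 1 one_pos).trans_eq (by simp))
  obtain ⟨c, hc, hc_slope⟩ := exists_deriv_eq_slope M hab
    (fun x hx => (hM x (ha.trans_le hx.1)).continuousAt.continuousWithinAt)
    (fun x hx => (hM x (ha.trans hx.1)).differentiableWithinAt)
  rw [slope_def_field, ← hc_slope]
  calc ‖deriv M c‖ ≤ C' * c ^ (γ - 1) := hM'_le c (ha.trans hc.1)
    _ ≤ C' * a ^ (γ - 1) :=
      mul_le_mul_of_nonneg_left (Real.rpow_le_rpow_of_nonpos ha hc.1.le (by linarith)) hC'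

theorem tendsto_integral_slope_comp_sub_mul (hγ : 0 < γ) (hγ1 : γ ≤ 1)
    (hM : ∀ θ > 0, DifferentiableAt ℝ M θ)
    (hM'_le : ∀ θ > 0, ‖deriv M θ‖ ≤ C' * θ ^ (γ - 1)) (hr : ContinuousOn r (Icc 0 T))
    (ht0 : 0 ≤ t) (htT : t ≤ T) :
    Tendsto (fun s => ∫ τ in 0..t, (M (s - τ) * r τ - M (t - τ) * r τ) / (s - t)) (𝓝[>] t)
      (𝓝 (∫ τ in 0..t, deriv M (t - τ) * r τ)) := by
  obtain ⟨R, hR⟩ := isCompact_Icc.exists_bound_of_continuousOn hr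
  have hrR : ∀ τ ∈ Ioc 0 t, ‖r τ‖ ≤ R := fun τ hτ => hR τ ⟨hτ.1.le, hτ.2.trans htT⟩
  have hMc : ContinuousOn M (Ioi 0) := fun θ hθ => (hM θ hθ).continuousAt.continuousWithinAt
  have hMs : ∀ s ≥ t, ContinuousOn (fun τ => M (s - τ)) (Ioo 0 t) := fun s hs =>
    hMc.comp (by fun_prop) fun τ hτ => show 0 < s - τ by linarith [hτ.2]
  have hr' : ContinuousOn r (Ioo 0 t) := hr.mono fun τ hτ => ⟨hτ.1.le, hτ.2.le.trans htT⟩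
  refine intervalIntegral.tendsto_integral_filter_of_dominated_convergence
    (fun τ => C' * (t - τ) ^ (γ - 1) * R) ?_ ?_ ?_ ?_
  · filter_upwards [self_mem_nhdsWithin] with s (hs : t < s)
    rw [uIoc_of_le ht0, ← Measure.restrict_congr_set Ioo_ae_eq_Ioc]
    exact ((((hMs s hs.le).mul hr').sub ((hMs t le_rfl).mul hr')).div_const _).aestronglyMeasurable
      measurableSet_Ioo
  · filter_upwards [self_mem_nhdsWithin] with s (hs : t < s)
    filter_upwards [Measure.ae_ne volume t] with τ hτt hτ
    rw [uIoc_of_le ht0] at hτ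
    have hθ : 0 < t - τ := sub_pos.mpr (lt_of_le_of_ne hτ.2 hτt)
    have hslope := norm_slope_le_rpow hγ1 hM hM'_le hθ (show t - τ < s - τ by linarith)
    calc ‖(M (s - τ) * r τ - M (t - τ) * r τ) / (s - t)‖
        = ‖slope M (t - τ) (s - τ)‖ * ‖r τ‖ := by
          rw [slope_def_field, ← norm_mul]; congr 1; ring
      _ ≤ C' * (t - τ) ^ (γ - 1) * R :=
          mul_le_mul hslope (hrR τ hτ) (norm_nonneg _) ((norm_nonneg _).trans hslope)
  · have h := (intervalIntegral.intervalIntegrable_rpow' (a := 0) (b := t) (r := γ - 1)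
      (by linarith)).comp_sub_left t
    rw [sub_zero, sub_self] at h
    exact (h.symm.const_mul C').mul_const R
  · filter_upwards [Measure.ae_ne volume t] with τ hτt hτ
    rw [uIoc_of_le ht0] at hτ
    have hθ : 0 < t - τ := sub_pos.mpr (lt_of_le_of_ne hτ.2 hτt)
    have hd : HasDerivAt (fun s => M (s - τ)) (deriv M (t - τ)) t :=
      (hM _ hθ).hasDerivAt.comp_sub_const t τ
    refine (((hasDerivAt_iff_tendsto_slope.mp hd).mono_left (nhdsGT_le_nhdsNE t)).mul_const
      (r τ)).congr fun s => ?_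
    rw [slope_def_field]
    ring

theorem tendsto_integral_comp_sub_mul_div (hγ : 0 < γ) (hM_le : ∀ θ > 0, ‖M θ‖ ≤ C * θ ^ γ)
    (hr : ContinuousOn r (Icc 0 T)) (ht0 : 0 ≤ t) (htT : t < T) :
    Tendsto (fun s => (∫ τ in t..s, M (s - τ) * r τ) / (s - t)) (𝓝[>] t) (𝓝 0) := by
  obtain ⟨R, hR⟩ := isCompact_Icc.exists_bound_of_continuousOn hr
  have hC : 0 ≤ C := (norm_nonneg _).trans ((hM_le 1 one_pos).trans_eq (by simp))
  have hR0 : 0 ≤ R := (norm_nonneg _).trans (hR t ⟨ht0, htT.le⟩)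
  have hlim : Tendsto (fun s => C * R * (s - t) ^ γ) (𝓝[>] t) (𝓝 0) := by
    have h : ContinuousAt (fun s => C * R * (s - t) ^ γ) t := by
      fun_prop (disch := exact Or.inr hγ.le)
    simpa [Real.zero_rpow hγ.ne'] using h.tendsto.mono_left nhdsWithin_le_nhds
  refine squeeze_zero_norm' ?_ hlim
  filter_upwards [Ioo_mem_nhdsGT htT] with s hs
  have hst : 0 < s - t := sub_pos.mpr hs.1
  have hnorm : ‖∫ τ in t..s, M (s - τ) * r τ‖ ≤ C * (s - t) ^ γ * R * |s - t| := by
    refine intervalIntegral.norm_integral_le_of_norm_le_const_ae ?_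
    filter_upwards [Measure.ae_ne volume s] with τ hτs hτ
    rw [uIoc_of_le hs.1.le] at hτ
    have hθ : 0 < s - τ := sub_pos.mpr (lt_of_le_of_ne hτ.2 hτs)
    calc ‖M (s - τ) * r τ‖ ≤ C * (s - τ) ^ γ * R := by
          rw [norm_mul]
          exact mul_le_mul (hM_le _ hθ) (hR τ ⟨by linarith [hτ.1], by linarith [hτ.2, hs.2]⟩)
            (norm_nonneg _) (by positivity)
      _ ≤ C * (s - t) ^ γ * R := by gcongr; linarith [hτ.1]
  rw [norm_div, Real.norm_of_nonneg hst.le, div_le_iff₀ hst]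
  rw [abs_of_pos hst] at hnorm
  exact hnorm.trans_eq (by ring)

theorem hasDerivWithinAt_integral_comp_sub_mul_Ici (hγ : 0 < γ) (hγ1 : γ ≤ 1)
    (hM : ∀ θ > 0, DifferentiableAt ℝ M θ) (hM_le : ∀ θ > 0, ‖M θ‖ ≤ C * θ ^ γ)
    (hM'_le : ∀ θ > 0, ‖deriv M θ‖ ≤ C' * θ ^ (γ - 1)) (hr : ContinuousOn r (Icc 0 T))
    (ht0 : 0 ≤ t) (htT : t < T) :
    HasDerivWithinAt (fun s => ∫ τ in 0..s, M (s - τ) * r τ)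
      (∫ τ in 0..t, deriv M (t - τ) * r τ) (Ici t) t := by
  have hMc : ContinuousOn M (Ioi 0) := fun θ hθ => (hM θ hθ).continuousAt.continuousWithinAt
  have hint := fun s (hs : 0 ≤ s) (hsT : s ≤ T) =>
    intervalIntegrable_comp_sub_mul (by linarith) hMc hM_le hr hs hsT
  have hlim := (tendsto_integral_slope_comp_sub_mul hγ hγ1 hM hM'_le hr ht0 htT.le).add
    (tendsto_integral_comp_sub_mul_div hγ hM_le hr ht0 htT)
  rw [add_zero] at hlim
  rw [hasDerivWithinAt_iff_tendsto_slope, Ici_sdiff_left]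
  refine hlim.congr' ?_
  filter_upwards [Ioo_mem_nhdsGT htT] with s hs
  exact (slope_intervalIntegral_eq (F := fun s τ => M (s - τ) * r τ)
    (hint s (ht0.trans hs.1.le) hs.2.le) (hint t ht0 htT.le)
    (by rw [uIcc_of_le (ht0.trans hs.1.le)]; exact ⟨ht0, hs.1.le⟩)).symm

end ConvolutionKernel

section Mfun

variable {γ μ θ : ℝ}

noncomputable def Kfun (γ μ θ : ℝ) : ℝ :=
  ∫ ξ in (0:ℝ)..θ, ξ ^ (2 * γ - 1) * Real.exp (-(μ * ξ ^ γ))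

theorem intervalIntegrable_Kfun_integrand (hγ : 0 < γ) (a b : ℝ) :
    IntervalIntegrable (fun ξ : ℝ => ξ ^ (2 * γ - 1) * Real.exp (-(μ * ξ ^ γ))) volume a b :=
  (intervalIntegral.intervalIntegrable_rpow' (by linarith)).mul_continuousOn
    (by fun_prop (disch := exact hγ.le))

theorem hasDerivAt_Kfun (hγ : 0 < γ) (hθ : 0 < θ) :
    HasDerivAt (Kfun γ μ) (θ ^ (2 * γ - 1) * Real.exp (-(μ * θ ^ γ))) θ :=
  intervalIntegral.integral_hasDerivAt_right (intervalIntegrable_Kfun_integrand hγ 0 θ)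
    (by fun_prop : Measurable _).aestronglyMeasurable.stronglyMeasurableAtFilter
    (by fun_prop (disch := exact Or.inl hθ.ne'))

theorem Kfun_nonneg (hθ : 0 ≤ θ) : 0 ≤ Kfun γ μ θ :=
  intervalIntegral.integral_nonneg hθ fun _ hξ =>
    mul_nonneg (Real.rpow_nonneg hξ.1 _) (Real.exp_pos _).le

theorem Kfun_le (hγ : 0 < γ) (hμ : 0 ≤ μ) (hθ : 0 ≤ θ) : Kfun γ μ θ ≤ θ ^ (2 * γ) / (2 * γ) := by
  calc Kfun γ μ θ ≤ ∫ ξ in (0:ℝ)..θ, ξ ^ (2 * γ - 1) := by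
        refine intervalIntegral.integral_mono_on hθ (intervalIntegrable_Kfun_integrand hγ 0 θ)
          (intervalIntegral.intervalIntegrable_rpow' (by linarith)) fun ξ hξ => ?_
        refine mul_le_of_le_one_right (Real.rpow_nonneg hξ.1 _) (Real.exp_le_one_iff.mpr ?_)
        exact neg_nonpos.mpr (mul_nonneg hμ (Real.rpow_nonneg hξ.1 _))
    _ = θ ^ (2 * γ) / (2 * γ) := by
        rw [integral_rpow (Or.inl (by linarith)), show 2 * γ - 1 + 1 = 2 * γ by ring,
          Real.zero_rpow (by positivity)]
        ring

theorem intervalIntegrable_one_sub_exp_div_rpow (hγ : 0 < γ) (hθ : 0 ≤ θ) :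
    IntervalIntegrable (fun ξ : ℝ => (1 - Real.exp (-(μ * ξ ^ γ))) / ξ ^ (1 - γ)) volume 0 θ := by
  have h := (intervalIntegral.intervalIntegrable_rpow' (r := γ - 1) (a := 0) (b := θ)
    (by linarith)).mul_continuousOn
      (g := fun ξ : ℝ => 1 - Real.exp (-(μ * ξ ^ γ))) (by fun_prop (disch := exact hγ.le))
  rw [intervalIntegrable_iff, uIoc_of_le hθ] at h ⊢
  refine h.congr_fun (fun ξ hξ => ?_) measurableSet_Ioc
  rw [div_eq_mul_inv, ← Real.rpow_neg hξ.1.le, neg_sub, mul_comm]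

theorem integral_one_sub_exp_div_rpow (hγ : 0 < γ) (hθ : 0 ≤ θ) :
    ∫ ξ in (0:ℝ)..θ, (1 - Real.exp (-(μ * ξ ^ γ))) / ξ ^ (1 - γ) =
      θ ^ γ * (1 - Real.exp (-(μ * θ ^ γ))) / γ - μ * Kfun γ μ θ := by
  have hderiv : ∀ ξ ∈ Ioo 0 θ,
      HasDerivAt (fun ξ : ℝ => ξ ^ γ * (1 - Real.exp (-(μ * ξ ^ γ))) / γ)
        ((1 - Real.exp (-(μ * ξ ^ γ))) / ξ ^ (1 - γ)
          + μ * (ξ ^ (2 * γ - 1) * Real.exp (-(μ * ξ ^ γ)))) ξ := by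
    intro ξ hξ
    have hp : HasDerivAt (fun ξ : ℝ => ξ ^ γ) (γ * ξ ^ (γ - 1)) ξ :=
      Real.hasDerivAt_rpow_const (Or.inl hξ.1.ne')
    refine ((hp.mul (((hp.const_mul μ).neg.exp).const_sub 1)).div_const γ).congr_deriv ?_
    have hinv : (ξ ^ (1 - γ))⁻¹ = ξ ^ (γ - 1) := by rw [← Real.rpow_neg hξ.1.le, neg_sub]
    rw [div_eq_mul_inv _ (ξ ^ (1 - γ)), hinv, show 2 * γ - 1 = γ + (γ - 1) by ring,
      Real.rpow_add hξ.1]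
    simp only [Pi.neg_apply]
    field_simp
  have hg := intervalIntegrable_one_sub_exp_div_rpow (μ := μ) hγ hθ
  have hk := (intervalIntegrable_Kfun_integrand (μ := μ) hγ 0 θ).const_mul μ
  have hftc := intervalIntegral.integral_eq_sub_of_hasDeriv_right_of_le hθ (by fun_prop
    (disch := exact hγ.le)) (fun ξ hξ => (hderiv ξ hξ).hasDerivWithinAt) (hg.add hk)
  rw [intervalIntegral.integral_add hg hk, intervalIntegral.integral_const_mul,
    Real.zero_rpow hγ.ne', zero_mul, zero_div, sub_zero] at hftc
  rw [Kfun]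
  linarith

theorem Mfun_eq (hγ : 0 < γ) (hθ : 0 < θ) :
    Mfun γ μ θ = (1 - Real.exp (-(μ * θ ^ γ))) / γ - μ * (θ ^ (-γ) * Kfun γ μ θ) := by
  rw [Mfun, integral_one_sub_exp_div_rpow hγ hθ.le, Real.rpow_neg hθ.le]
  field_simp

theorem hasDerivAt_Mfun (hγ : 0 < γ) (hθ : 0 < θ) :
    HasDerivAt (Mfun γ μ) (μ * γ * θ ^ (-(γ + 1)) * Kfun γ μ θ) θ := by
  have hp : HasDerivAt (fun x : ℝ => x ^ γ) (γ * θ ^ (γ - 1)) θ :=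
    Real.hasDerivAt_rpow_const (Or.inl hθ.ne')
  have hq : HasDerivAt (fun x : ℝ => x ^ (-γ)) (-γ * θ ^ (-γ - 1)) θ :=
    Real.hasDerivAt_rpow_const (Or.inl hθ.ne')
  have hF := ((((hp.const_mul μ).neg.exp).const_sub 1).div_const γ).sub
    ((hq.mul (hasDerivAt_Kfun (μ := μ) hγ hθ)).const_mul μ)
  refine (hF.congr_of_eventuallyEq ?_).congr_deriv ?_
  · filter_upwards [Ioi_mem_nhds hθ] with x hx using Mfun_eq hγ hx
  · have hpow : θ ^ (-γ) * θ ^ (2 * γ - 1) = θ ^ (γ - 1) := by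
      rw [← Real.rpow_add hθ]; ring_nf
    simp only [Pi.neg_apply]
    rw [← mul_assoc (θ ^ (-γ)), hpow, show -(γ + 1) = -γ - 1 by ring]
    field_simp
    ring

theorem Mfun_nonneg (hμ : 0 ≤ μ) (hθ : 0 ≤ θ) : 0 ≤ Mfun γ μ θ := by
  refine mul_nonneg (Real.rpow_nonneg hθ _) (intervalIntegral.integral_nonneg hθ fun ξ hξ => ?_)
  refine div_nonneg (sub_nonneg.mpr (Real.exp_le_one_iff.mpr ?_)) (Real.rpow_nonneg hξ.1 _)
  exact neg_nonpos.mpr (mul_nonneg hμ (Real.rpow_nonneg hξ.1 _))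

theorem norm_Mfun_le (hγ : 0 < γ) (hμ : 0 ≤ μ) (hθ : 0 < θ) : ‖Mfun γ μ θ‖ ≤ μ / γ * θ ^ γ := by
  have hK : 0 ≤ μ * (θ ^ (-γ) * Kfun γ μ θ) :=
    mul_nonneg hμ (mul_nonneg (Real.rpow_nonneg hθ.le _) (Kfun_nonneg hθ.le))
  rw [Real.norm_of_nonneg (Mfun_nonneg hμ hθ.le), Mfun_eq hγ hθ]
  calc (1 - Real.exp (-(μ * θ ^ γ))) / γ - μ * (θ ^ (-γ) * Kfun γ μ θ)
      ≤ (1 - Real.exp (-(μ * θ ^ γ))) / γ := sub_le_self _ hK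
    _ ≤ μ * θ ^ γ / γ := by
        gcongr
        linarith [Real.one_sub_le_exp_neg (μ * θ ^ γ)]
    _ = μ / γ * θ ^ γ := by ring

theorem norm_deriv_Mfun_le (hγ : 0 < γ) (hμ : 0 ≤ μ) (hθ : 0 < θ) :
    ‖deriv (Mfun γ μ) θ‖ ≤ μ / 2 * θ ^ (γ - 1) := by
  have hK := Kfun_nonneg (γ := γ) (μ := μ) hθ.le
  rw [(hasDerivAt_Mfun hγ hθ).deriv, Real.norm_of_nonneg (by positivity)]
  calc μ * γ * θ ^ (-(γ + 1)) * Kfun γ μ θ ≤ μ * γ * θ ^ (-(γ + 1)) * (θ ^ (2 * γ) / (2 * γ)) := by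
        gcongr
        exact Kfun_le hγ hμ hθ.le
    _ = μ / 2 * (θ ^ (-(γ + 1)) * θ ^ (2 * γ)) := by
        field_simp
    _ = μ / 2 * θ ^ (γ - 1) := by
        rw [← Real.rpow_add hθ]
        ring_nf

end Mfun

theorem stmt12_general (γ μ T : ℝ) (hγ0 : 0 < γ) (hγ1 : γ < 1) (hμ : 0 < μ)
    (r : ℝ → ℝ) (hr : ContinuousOn r (Icc 0 T))
    (v₃ : ℝ → ℝ) (hv₃ : ∀ s, v₃ s = ∫ τ in (0:ℝ)..s, Mfun γ μ (s - τ) * r τ)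
    (t : ℝ) (ht0 : 0 < t) (htT : t < T) :
    (∫ τ in (0:ℝ)..t, deriv (Mfun γ μ) (t - τ) * r τ) =
      μ * γ * ∫ τ in (0:ℝ)..t, (r τ / (t - τ) ^ (γ + 1)) *
        ∫ ξ in (0:ℝ)..(t - τ), ξ ^ (2 * γ - 1) * Real.exp (-(μ * ξ ^ γ)) ∧
    HasDerivWithinAt v₃
      (μ * γ * ∫ τ in (0:ℝ)..t, (r τ / (t - τ) ^ (γ + 1)) *
        ∫ ξ in (0:ℝ)..(t - τ), ξ ^ (2 * γ - 1) * Real.exp (-(μ * ξ ^ γ)))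
      (Set.Ici t) t := by
  have hderiv_integral : (∫ τ in (0:ℝ)..t, deriv (Mfun γ μ) (t - τ) * r τ) =
      μ * γ * ∫ τ in (0:ℝ)..t, (r τ / (t - τ) ^ (γ + 1)) *
        ∫ ξ in (0:ℝ)..(t - τ), ξ ^ (2 * γ - 1) * Real.exp (-(μ * ξ ^ γ)) := by
    rw [← intervalIntegral.integral_const_mul]
    refine intervalIntegral.integral_congr_ae ?_
    filter_upwards [Measure.ae_ne volume t] with τ hτt hτ
    rw [uIoc_of_le ht0.le] at hτ
    have hθ : 0 < t - τ := sub_pos.mpr (lt_of_le_of_ne hτ.2 hτt)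
    rw [(hasDerivAt_Mfun hγ0 hθ).deriv, Real.rpow_neg hθ.le, Kfun]
    ring
  refine ⟨hderiv_integral, ?_⟩
  rw [← hderiv_integral, show v₃ = fun s => ∫ τ in (0:ℝ)..s, Mfun γ μ (s - τ) * r τ from funext hv₃]
  exact hasDerivWithinAt_integral_comp_sub_mul_Ici hγ0 hγ1.le
    (fun θ hθ => (hasDerivAt_Mfun hγ0 hθ).differentiableAt)
    (fun θ hθ => norm_Mfun_le hγ0 hμ.le hθ) (fun θ hθ => norm_deriv_Mfun_le hγ0 hμ.le hθ)
    hr ht0.le htT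

theorem stmt12 (γ μ T : ℝ) (hγ0 : 0 < γ) (hγ1 : γ < 1) (hμ : 0 < μ) (hT : 0 < T)
    (r : ℝ → ℝ) (hr : ContinuousOn r (Icc 0 T))
    (v₃ : ℝ → ℝ) (hv₃ : ∀ s, v₃ s = ∫ τ in (0:ℝ)..s, Mfun γ μ (s - τ) * r τ)
    (t : ℝ) (ht0 : 0 < t) (htT : t < T) :
    (∫ τ in (0:ℝ)..t, deriv (Mfun γ μ) (t - τ) * r τ) =
      μ * γ * ∫ τ in (0:ℝ)..t, (r τ / (t - τ) ^ (γ + 1)) *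
        ∫ ξ in (0:ℝ)..(t - τ), ξ ^ (2 * γ - 1) * Real.exp (-(μ * ξ ^ γ)) ∧
    HasDerivWithinAt v₃
      (μ * γ * ∫ τ in (0:ℝ)..t, (r τ / (t - τ) ^ (γ + 1)) *
        ∫ ξ in (0:ℝ)..(t - τ), ξ ^ (2 * γ - 1) * Real.exp (-(μ * ξ ^ γ)))
      (Set.Ici t) t :=
  stmt12_general γ μ T hγ0 hγ1 hμ r hr v₃ hv₃ t ht0 htT
end
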